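/- arXiv:1812.01401 — 2 statements merged into one kernel-verified Lean document; each statement's English description precedes it below -/
import Mathlib

section
/- On the Scherk graph z = ln(cos y) - ln(cos x), the Gauss curvature satisfies the Finn–Osserman estimate √(−K) ≤ (1 + n₃²)/2, where n₃ = 1/√(1 + tan²x + tan²y) is the third component of the upward unit normal. -/
/-!
Both partial functions of the Scherk graph are `± log ∘ cos`, so `F_x = tan x`, `F_y = -tan y`,
`F_xx = 1 + tan² x`, `F_yy = -(1 + tan² y)` and `F_xy = 0`. With `a = tan² x`, `b = tan² y` and
`s = 1 + a + b = 1/n₃²` this gives `-K = (1 + a)(1 + b)/s²`, and the estimate is the AM–GM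
inequality `(1 + a)(1 + b) ≤ ((s + 1)/2)²`.
-/

open Real Filter Topology

namespace Real

theorem hasDerivAt_log_cos {t : ℝ} (h : cos t ≠ 0) :
    HasDerivAt (fun s => log (cos s)) (-tan t) t := by
  simpa [tan_eq_sin_div_cos, neg_div] using (hasDerivAt_cos t).log h

theorem deriv_log_cos {t : ℝ} (h : cos t ≠ 0) : deriv (fun s => log (cos s)) t = -tan t :=
  (hasDerivAt_log_cos h).deriv

theorem deriv_deriv_log_cos {t : ℝ} (h : cos t ≠ 0) :
    deriv (deriv fun s => log (cos s)) t = -(1 + tan t ^ 2) := by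
  have hev : deriv (fun s => log (cos s)) =ᶠ[𝓝 t] fun s => -tan s :=
    (continuous_cos.continuousAt.eventually_ne h).mono fun s hs => deriv_log_cos hs
  rw [hev.deriv_eq, deriv.fun_neg, (hasDerivAt_tan h).deriv, ← inv_one_add_tan_sq h, one_div,
    inv_inv]

end Real

theorem sqrt_mul_div_sq_le_half_one_add_inv {a b : ℝ} (ha : 0 ≤ a) (hb : 0 ≤ b) :
    √((1 + a) * (1 + b) / (1 + a + b) ^ 2) ≤ (1 + 1 / (1 + a + b)) / 2 := by
  have hs : 0 < 1 + a + b := by linarith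
  have amgm : (1 + a) * (1 + b) ≤ ((1 + a + b + 1) / 2) ^ 2 := by
    nlinarith [four_mul_le_sq_add (1 + a) (1 + b)]
  rw [sqrt_le_left (by positivity)]
  calc (1 + a) * (1 + b) / (1 + a + b) ^ 2
      ≤ ((1 + a + b + 1) / 2) ^ 2 / (1 + a + b) ^ 2 := by gcongr
    _ = ((1 + 1 / (1 + a + b)) / 2) ^ 2 := by field_simp

/-- On the Scherk graph `z = ln(cos y) - ln(cos x)`, the Gauss curvature
satisfies the Finn–Osserman estimate `√(−K) ≤ (1 + n₃²)/2`, where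
`n₃ = 1/√(1 + tan²x + tan²y)`. -/
theorem scherk_finn_osserman_estimate (x y : ℝ)
    (hx : x ∈ Set.Ioo (-(π/2)) (π/2)) (hy : y ∈ Set.Ioo (-(π/2)) (π/2))
    (F : ℝ → ℝ → ℝ) (hF : ∀ u v, F u v = Real.log (Real.cos v) - Real.log (Real.cos u))
    (Fx Fy Fxx Fyy Fxy K n₃ : ℝ)
    (hFx : Fx = deriv (fun t => F t y) x)
    (hFy : Fy = deriv (fun t => F x t) y)
    (hFxx : Fxx = deriv (deriv (fun t => F t y)) x)
    (hFyy : Fyy = deriv (deriv (fun t => F x t)) y)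
    (hFxy : Fxy = deriv (fun t => deriv (fun s => F t s) y) x)
    (hK : K = (Fxx * Fyy - Fxy ^ 2) / (1 + Fx ^ 2 + Fy ^ 2) ^ 2)
    (hn₃ : n₃ = 1 / Real.sqrt (1 + Real.tan x ^ 2 + Real.tan y ^ 2)) :
    Real.sqrt (-K) ≤ (1 + n₃ ^ 2) / 2 := by
  have hcx : cos x ≠ 0 := (cos_pos_of_mem_Ioo hx).ne'
  have hcy : cos y ≠ 0 := (cos_pos_of_mem_Ioo hy).ne'
  simp only [hF] at hFx hFy hFxx hFyy hFxy
  rw [deriv_const_sub, deriv_log_cos hcx, neg_neg] at hFx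
  rw [deriv_sub_const, deriv_log_cos hcy] at hFy
  rw [deriv_const_sub', deriv.fun_neg, deriv_deriv_log_cos hcx, neg_neg] at hFxx
  rw [deriv_sub_const_fun, deriv_deriv_log_cos hcy] at hFyy
  simp only [deriv_sub_const, deriv_const] at hFxy
  have hn₃_sq : n₃ ^ 2 = 1 / (1 + tan x ^ 2 + tan y ^ 2) := by
    rw [hn₃, div_pow, one_pow, sq_sqrt (by positivity)]
  have hK_neg : -K = (1 + tan x ^ 2) * (1 + tan y ^ 2) / (1 + tan x ^ 2 + tan y ^ 2) ^ 2 := by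
    rw [hK, hFx, hFy, hFxx, hFyy, hFxy]
    ring
  rw [hK_neg, hn₃_sq]
  exact sqrt_mul_div_sq_le_half_one_add_inv (sq_nonneg _) (sq_nonneg _)
end

section
/- Let π⁻¹: ℂ → S² be inverse stereographic projection. For G, α ∈ ℂ with α ≠ 0, setting n = π⁻¹(G) and V = π⁻¹(α), one has 1 - ⟨n, V⟩² = (2|α|/(1 + |α|²))² · |G - α|² |G + 1/ᾱ|² / (1 + |G|²)². -/
/-!
With `x = ⟪π⁻¹ z, π⁻¹ w⟫`, both factors of `1 - x² = (1 - x)(1 + x)` are half squared chordal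
distances: `1 - x = 2|z - w|² / ((1 + |z|²)(1 + |w|²))`, and since `-π⁻¹ w = π⁻¹(-1/w̄)`,
`1 + x = 2|1 + z w̄|² / ((1 + |z|²)(1 + |w|²))`. It remains to note `|1 + z w̄| = |w| |z + 1/w̄|`.
-/

open scoped RealInnerProductSpace ComplexConjugate

noncomputable def invSter (w : ℂ) : EuclideanSpace ℝ (Fin 3) :=
  (‖w‖ ^ 2 + 1)⁻¹ •
    (WithLp.toLp 2 ![2 * w.re, 2 * w.im, ‖w‖ ^ 2 - 1] : EuclideanSpace ℝ (Fin 3))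

theorem inner_invSter (z w : ℂ) :
    ⟪invSter z, invSter w⟫ =
      (4 * (z * conj w).re + (‖z‖ ^ 2 - 1) * (‖w‖ ^ 2 - 1)) /
        ((‖z‖ ^ 2 + 1) * (‖w‖ ^ 2 + 1)) := by
  simp only [invSter, inner_smul_left, inner_smul_right, PiLp.inner_apply, Fin.sum_univ_three,
    RCLike.inner_apply, conj_trivial, Complex.mul_re, Complex.conj_re, Complex.conj_im,
    Matrix.cons_val_zero, Matrix.cons_val_one, Matrix.cons_val, mul_neg, sub_neg_eq_add]
  field_simp
  ring

theorem one_sub_inner_invSter (z w : ℂ) :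
    1 - ⟪invSter z, invSter w⟫ = 2 * ‖z - w‖ ^ 2 / ((‖z‖ ^ 2 + 1) * (‖w‖ ^ 2 + 1)) := by
  rw [inner_invSter]
  field_simp
  simp only [Complex.sq_norm, Complex.normSq_sub]
  ring

theorem one_add_inner_invSter (z w : ℂ) :
    1 + ⟪invSter z, invSter w⟫ =
      2 * ‖1 + z * conj w‖ ^ 2 / ((‖z‖ ^ 2 + 1) * (‖w‖ ^ 2 + 1)) := by
  rw [inner_invSter]
  field_simp
  simp only [Complex.sq_norm, Complex.normSq_add, Complex.normSq_mul, Complex.normSq_conj,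
    map_one, one_mul, Complex.conj_re]
  ring

theorem norm_add_one_div_conj {w : ℂ} (hw : w ≠ 0) (z : ℂ) :
    ‖z + 1 / conj w‖ = ‖1 + z * conj w‖ / ‖w‖ := by
  have hw' : conj w ≠ 0 := (map_ne_zero _).mpr hw
  rw [← Complex.norm_conj w, eq_div_iff (norm_ne_zero_iff.mpr hw'), ← norm_mul, add_mul,
    one_div_mul_cancel hw', add_comm]

/-- For `α ≠ 0`, with `n = π⁻¹(G)` and `V = π⁻¹(α)`,
`1 - ⟨n, V⟩² = (2|α|/(1 + |α|²))² · |G - α|² |G + 1/ᾱ|² / (1 + |G|²)²`. -/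
theorem one_sub_inner_sq_invSter (G α : ℂ) (hα : α ≠ 0) :
    1 - ⟪invSter G, invSter α⟫ ^ 2 =
      (2 * ‖α‖ / (1 + ‖α‖ ^ 2)) ^ 2 *
        (‖G - α‖ ^ 2 * ‖G + 1 / (starRingEnd ℂ) α‖ ^ 2) /
          (1 + ‖G‖ ^ 2) ^ 2 := by
  have hα' : ‖α‖ ≠ 0 := norm_ne_zero_iff.mpr hα
  rw [show 1 - ⟪invSter G, invSter α⟫ ^ 2 =
      (1 - ⟪invSter G, invSter α⟫) * (1 + ⟪invSter G, invSter α⟫) by ring,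
    one_sub_inner_invSter, one_add_inner_invSter, norm_add_one_div_conj hα]
  field_simp
  ring
end
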